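/- Let p ∈ F[x] be a nonconstant polynomial and let G = G^σ ⊕ G^τ. Then G_p = G^σ_p ⊕ G^τ_p; precisely, if θ = σ₀·τ₀ ∈ G_p with σ₀ ∈ G^σ and τ₀ ∈ G^τ, say θ(p) = c·p with c ∈ F nonzero, then σ₀(p) = p and τ₀(p) = c·p. Consequently G/G_p ≅ G^σ/G^σ_p ⊕ G^τ/G^τ_p is a free abelian group. -/

import Mathlib

/-!
Write `p ∈ F[y, z]` as a polynomial in `z` over `F[y]`. On polynomials, `σ^α` is the substitution
`y ↦ y + α`, which acts on the `F[y]`-coefficients only, and `τ^β` is `z ↦ q^β z`, which multiplies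
the coefficient `p_e` of `z^e` by `q^⟨β, e⟩`. Hence `σ^α τ^β p = c p` says that
`σ^α p_e = c q^(-⟨β, e⟩) p_e` for every nonzero coefficient. Restricted to a line on which `p_e`
does not vanish, a translate of a nonzero polynomial has the same leading coefficient, so it is a
multiple of the polynomial only with factor `1`: thus `σ^α p_e = p_e` and `c = q^⟨β, e⟩`.

For freeness, the isotropy lattices are saturated: a polynomial invariant under translation by
`nα` is invariant under translation by `α`, since in characteristic zero a one-variable polynomial
with a nonzero period is constant; and `q^(n⟨β, e⟩)` determines `⟨β, e⟩` because `q` is not a root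
of unity. A finitely generated torsion-free abelian group is free.
-/

noncomputable section

/-- The field of rational functions `F(x₁,…,xₙ)`, modeled as the fraction field of the
multivariate polynomial ring. -/
abbrev MvRat (F : Type*) [Field F] (n : ℕ) := FractionRing (MvPolynomial (Fin n) F)

/-- The image of the variable `xᵢ` in `F(x₁,…,xₙ)`. -/
def xv {F : Type*} [Field F] {n : ℕ} (i : Fin n) : MvRat F n :=
  algebraMap (MvPolynomial (Fin n) F) (MvRat F n) (MvPolynomial.X i)

/-- The subfield `F(x₂,…,xₙ)` of `F(x₁,…,xₙ)` (the variable `x₁` has index `0`). -/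
def hatField (F : Type*) [Field F] (n : ℕ) [NeZero n] : Subfield (MvRat F n) :=
  Subfield.closure (Set.range (algebraMap F (MvRat F n)) ∪ (xv '' {i : Fin n | i ≠ 0}))

/-- `a` is a polynomial in `x1` over the subfield `E` of degree `< D`. -/
def IsPolyDeg {L : Type*} [Field L] (E : Subfield L) (x1 : L) (D : ℕ) (a : L) : Prop :=
  ∃ cf : Fin D → E, a = ∑ k : Fin D, (cf k : L) * x1 ^ (k : ℕ)

/-- `a` is a polynomial in `x1` over the subfield `E`, i.e. `a ∈ E[x1]`. -/
def IsPolyE {L : Type*} [Field L] (E : Subfield L) (x1 a : L) : Prop :=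
  ∃ D : ℕ, IsPolyDeg E x1 D a

/-- `a` is a Laurent polynomial in `x1` over the subfield `E`, i.e. `a ∈ E[x1, x1⁻¹]`. -/
def IsLaurent {L : Type*} [Field L] (E : Subfield L) (x1 a : L) : Prop :=
  ∃ (s : Finset ℤ) (cf : ℤ → L), (∀ k ∈ s, cf k ∈ E) ∧ a = ∑ k ∈ s, cf k * x1 ^ k

/-- For a family `θ` of `F`-automorphisms and an exponent vector `α`,
the product `∏ i, θᵢ^(αᵢ)` (the element `θ_x^α` of the group generated by the `θᵢ`). -/
def thetaPowS {F L : Type*} [CommSemiring F] [Semiring L] [Algebra F L] {ι : Type*} [Fintype ι]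
    (θ : ι → (L ≃ₐ[F] L)) (α : ι → ℤ) : L ≃ₐ[F] L :=
  (Finset.univ.toList.map fun i => θ i ^ α i).prod

/-- Membership in the space `V_{[d]_G,j}`: `f` is a finite sum of fractions `a_g / g(d)^j`
with `g` in the group `G` and `a_g ∈ E[x₁]` of degree `< D` (`= deg_{x₁} d`). -/
def MemV {F L : Type*} [Field F] [Field L] [Algebra F L] (G : Set (L ≃ₐ[F] L))
    (E : Subfield L) (x1 : L) (dd : L) (D j : ℕ) (f : L) : Prop :=
  ∃ s : Finset (L ≃ₐ[F] L), ↑s ⊆ G ∧ ∃ a : (L ≃ₐ[F] L) → L,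
    (∀ g ∈ s, IsPolyDeg E x1 D (a g)) ∧ f = ∑ g ∈ s, a g / (g dd) ^ j

/-- `p` and `p'` are `G`-equivalent: `p = c · g(p')` for some nonzero `c ∈ F` and `g ∈ G`. -/
def GEquivSet {F L : Type*} [Field F] [Field L] [Algebra F L] (G : Set (L ≃ₐ[F] L))
    (p p' : L) : Prop :=
  ∃ c : F, c ≠ 0 ∧ ∃ g ∈ G, p = algebraMap F L c * g p'

/-- `w` divides `p` inside the ring `E[x1]`. -/
def DvdE {L : Type*} [Field L] (E : Subfield L) (x1 w p : L) : Prop :=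
  ∃ u : L, IsPolyE E x1 u ∧ p = w * u

/-- `p ∈ E[x₁]` is normal w.r.t. `θ1`: `gcd(p, θ1^ℓ(p)) = 1` for all nonzero `ℓ ∈ ℤ`,
i.e. every common divisor (in `E[x₁]`) of `p` and `θ1^ℓ(p)` is a unit (lies in `E`). -/
def NormalWrt {F L : Type*} [Field F] [Field L] [Algebra F L] (E : Subfield L) (x1 : L)
    (θ1 : L ≃ₐ[F] L) (p : L) : Prop :=
  ∀ ℓ : ℤ, ℓ ≠ 0 → ∀ w : L, IsPolyE E x1 w →
    DvdE E x1 w p → DvdE E x1 w ((θ1 ^ ℓ) p) → w ∈ E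

/-- The isotropy group of `p` (in exponent-vector coordinates): the subgroup of `ℤ^ι`
of all `α` with `Θ(α)(p) = c·p` for some nonzero `c ∈ F`. -/
def isotropyZ {F L : Type*} [Field F] [Field L] [Algebra F L] {ι : Type*}
    (Θ : (ι → ℤ) → (L ≃ₐ[F] L))
    (hadd : ∀ α β, Θ (α + β) = Θ α * Θ β) (h0 : Θ 0 = 1) (p : L) :
    AddSubgroup (ι → ℤ) where
  carrier := {α | ∃ c : F, c ≠ 0 ∧ Θ α p = algebraMap F L c * p}
  zero_mem' := ⟨1, one_ne_zero, by simp [h0]⟩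
  add_mem' := by
    rintro α β ⟨c, hc, hcp⟩ ⟨e, he, hep⟩
    refine ⟨e * c, mul_ne_zero he hc, ?_⟩
    rw [hadd, AlgEquiv.mul_apply, hep, map_mul, AlgEquiv.commutes, hcp, map_mul]
    ring
  neg_mem' := by
    rintro α ⟨c, hc, hcp⟩
    refine ⟨c⁻¹, inv_ne_zero hc, ?_⟩
    have h1 : Θ (-α) (Θ α p) = p := by
      rw [← AlgEquiv.mul_apply, ← hadd, neg_add_cancel, h0, AlgEquiv.one_apply]
    rw [hcp, map_mul, AlgEquiv.commutes] at h1
    have hc0 : (algebraMap F L) c ≠ 0 :=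
      (map_ne_zero_iff _ (algebraMap F L).injective).mpr hc
    rw [map_inv₀, eq_inv_mul_iff_mul_eq₀ hc0]
    exact h1

end


noncomputable section

/-- The field of rational functions `F(y₁,…,y_k,z₁,…,z_m)`. -/
abbrev MvRatS (F : Type*) [Field F] (k m : ℕ) := FractionRing (MvPolynomial (Fin k ⊕ Fin m) F)

/-- The image of a variable in `F(y,z)`. -/
def xvS {F : Type*} [Field F] {k m : ℕ} (i : Fin k ⊕ Fin m) : MvRatS F k m :=
  algebraMap (MvPolynomial (Fin k ⊕ Fin m) F) (MvRatS F k m) (MvPolynomial.X i)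

end

noncomputable section

theorem zpow_sum₀ {F ι : Type*} [Field F] {q : F} (hq : q ≠ 0) (s : Finset ι) (f : ι → ℤ) :
    q ^ (∑ i ∈ s, f i) = ∏ i ∈ s, q ^ f i := by
  classical
  induction s using Finset.induction with
  | empty => simp
  | insert i s hi ih => rw [Finset.sum_insert hi, Finset.prod_insert hi, zpow_add₀ hq, ih]

namespace Polynomial

variable {R : Type*} [CommRing R] [IsDomain R]

theorem eq_one_of_comp_X_add_C_eq_C_mul {g : R[X]} (hg : g ≠ 0) {a e : R}
    (h : g.comp (X + C a) = C e * g) : e = 1 := by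
  have hlc := leadingCoeff_comp (p := g) (q := X + C a) (by simp)
  rw [h, leadingCoeff_mul, leadingCoeff_C, leadingCoeff_X_add_C, one_pow, mul_one] at hlc
  exact mul_right_cancel₀ (leadingCoeff_ne_zero.2 hg) (hlc.trans (one_mul _).symm)

theorem eq_C_eval_zero_of_comp_X_add_C_eq_self [CharZero R] {g : R[X]} {s : R} (hs : s ≠ 0)
    (h : g.comp (X + C s) = g) : g = C (g.eval 0) := by
  have hmul : ∀ n : ℕ, g.eval (n * s) = g.eval 0 := by
    intro n
    induction n with
    | zero => simp
    | succ n ih =>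
      rw [Nat.cast_succ, add_one_mul, ← ih]
      simpa using congrArg (eval ((n : R) * s)) h
  have hinj : Function.Injective fun n : ℕ => (n : R) * s := fun m n hmn => by
    exact_mod_cast mul_right_cancel₀ hs hmn
  refine eq_of_infinite_eval_eq _ _ ((Set.infinite_range_of_injective hinj).mono ?_)
  rintro _ ⟨n, rfl⟩
  simp [hmul n]

end Polynomial

open MvPolynomial

namespace MvPolynomial

section Translate

variable {ι R : Type*} [CommSemiring R]

def translate (γ : ι → R) : MvPolynomial ι R →ₐ[R] MvPolynomial ι R :=
  aeval fun i => X i + C (γ i)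

theorem eval_translate (γ b : ι → R) (r : MvPolynomial ι R) :
    eval b (translate γ r) = eval (b + γ) r := by
  have : (aeval b).comp (translate γ) = aeval (b + γ) := algHom_ext fun i => by simp [translate]
  simpa [coe_aeval_eq_eval] using DFunLike.congr_fun this r

def restrictToLine (b γ : ι → R) : MvPolynomial ι R →ₐ[R] Polynomial R :=
  aeval fun i => Polynomial.C (b i) + Polynomial.C (γ i) * Polynomial.X

theorem eval_restrictToLine (b γ : ι → R) (r : MvPolynomial ι R) (t : R) :
    (restrictToLine b γ r).eval t = eval (b + t • γ) r := by
  have : (Polynomial.aeval t).comp (restrictToLine b γ) = aeval (b + t • γ) :=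
    algHom_ext fun i => by simp [restrictToLine]; ring
  simpa [coe_aeval_eq_eval] using DFunLike.congr_fun this r

theorem restrictToLine_translate (b γ : ι → R) (s : R) (r : MvPolynomial ι R) :
    restrictToLine b γ (translate (s • γ) r) =
      (restrictToLine b γ r).comp (Polynomial.X + Polynomial.C s) := by
  have : (restrictToLine b γ).comp (translate (s • γ)) =
      (Polynomial.aeval (Polynomial.X + Polynomial.C s)).comp (restrictToLine b γ) :=
    algHom_ext fun i => by
      simp [restrictToLine, translate]
      ring
  simpa [Polynomial.comp_eq_aeval] using DFunLike.congr_fun this r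

end Translate

section Eigen

variable {ι R : Type*} [CommRing R] [IsDomain R]

theorem eq_one_of_translate_eq_C_mul [Infinite R] {γ : ι → R} {r : MvPolynomial ι R} (hr : r ≠ 0)
    {e : R} (h : translate γ r = C e * r) : e = 1 := by
  obtain ⟨b, hb⟩ : ∃ b, eval b r ≠ 0 := by
    by_contra! h0
    exact hr (funext fun b => by simp [h0 b])
  have hline : restrictToLine b γ r ≠ 0 := fun h0 => hb <| by
    simpa [h0] using (eval_restrictToLine b γ r 0).symm
  refine Polynomial.eq_one_of_comp_X_add_C_eq_C_mul hline (a := 1) ?_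
  rw [← restrictToLine_translate, one_smul, h, map_mul]
  simp [restrictToLine]

theorem translate_eq_self_of_translate_smul_eq_self [CharZero R] {γ : ι → R}
    {r : MvPolynomial ι R} {s : R} (hs : s ≠ 0) (h : translate (s • γ) r = r) :
    translate γ r = r := by
  refine funext fun b => ?_
  have hconst := Polynomial.eq_C_eval_zero_of_comp_X_add_C_eq_self hs
    (by rw [← restrictToLine_translate, h] : (restrictToLine b γ r).comp _ = _)
  have h1 := congrArg (Polynomial.eval 1) hconst
  rw [Polynomial.eval_C, eval_restrictToLine, eval_restrictToLine] at h1
  simpa [eval_translate] using h1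

theorem exists_translate_eq_C_mul_of_zsmul [CharZero R] {n : ℤ} (hn : n ≠ 0) {γ : ι → R}
    {r : MvPolynomial ι R} {c : R} (h : translate ((n : R) • γ) r = C c * r) :
    ∃ c' : R, c' ≠ 0 ∧ translate γ r = C c' * r := by
  refine ⟨1, one_ne_zero, ?_⟩
  rcases eq_or_ne r 0 with rfl | hr
  · simp
  rw [eq_one_of_translate_eq_C_mul hr h, C_1, one_mul] at h
  rw [C_1, one_mul, translate_eq_self_of_translate_smul_eq_self (Int.cast_ne_zero.2 hn) h]

end Eigen

section Scale

variable {ι F R : Type*} [Field F] [CommRing R] [Algebra F R] {q : F}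

def scaleZPow (q : F) (w : ι → ℤ) : MvPolynomial ι R →ₐ[R] MvPolynomial ι R :=
  aeval fun i => C (algebraMap F R (q ^ w i)) * X i

theorem scaleZPow_monomial (hq : q ≠ 0) (w : ι → ℤ) (e : ι →₀ ℕ) (a : R) :
    scaleZPow q w (monomial e a) = monomial e (algebraMap F R (q ^ e.weight w) * a) := by
  have hprod : (e.prod fun i n => (q ^ w i) ^ n) = q ^ e.weight w := by
    simp only [Finsupp.prod, Finsupp.weight_apply, Finsupp.sum, zpow_sum₀ hq, nsmul_eq_mul,
      zpow_mul, zpow_natCast, mul_comm]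
  rw [scaleZPow, aeval_monomial, monomial_eq, map_mul, C_mul', Algebra.smul_def]
  simp only [Finsupp.prod, mul_pow, Finset.prod_mul_distrib, ← map_pow]
  rw [← hprod, Finsupp.prod, map_prod, map_prod, algebraMap_eq]
  ring

theorem coeff_scaleZPow (hq : q ≠ 0) (w : ι → ℤ) (r : MvPolynomial ι R) (e : ι →₀ ℕ) :
    coeff e (scaleZPow q w r) = algebraMap F R (q ^ e.weight w) * coeff e r := by
  classical
  induction r using induction_on' with
  | monomial d a =>
    rw [scaleZPow_monomial hq, coeff_monomial, coeff_monomial]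
    split_ifs with hde
    · rw [hde]
    · rw [mul_zero]
  | add r s hr hs => rw [map_add, coeff_add, coeff_add, hr, hs, mul_add]

theorem scaleZPow_eq_C_mul_iff [IsDomain R] (hq : q ≠ 0) {w : ι → ℤ} {r : MvPolynomial ι R}
    {c : F} :
    scaleZPow q w r = C (algebraMap F R c) * r ↔ ∀ e, coeff e r ≠ 0 → q ^ e.weight w = c := by
  constructor
  · intro h e he
    have hcoeff := congrArg (coeff e) h
    rw [coeff_scaleZPow hq, coeff_C_mul] at hcoeff
    exact (algebraMap F R).injective (mul_right_cancel₀ he hcoeff)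
  · intro h
    ext e
    rw [coeff_scaleZPow hq, coeff_C_mul]
    by_cases he : coeff e r = 0
    · simp [he]
    · rw [h e he]

theorem exists_scaleZPow_eq_C_mul_of_zsmul [IsDomain R] (hq0 : q ≠ 0)
    (hq : ∀ l : ℤ, l ≠ 0 → q ^ l ≠ 1) {n : ℤ} (hn : n ≠ 0) {w : ι → ℤ}
    {r : MvPolynomial ι R} {c : F} (h : scaleZPow q (n • w) r = C (algebraMap F R c) * r) :
    ∃ c' : F, c' ≠ 0 ∧ scaleZPow q w r = C (algebraMap F R c') * r := by
  rcases eq_or_ne r 0 with rfl | hr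
  · exact ⟨1, one_ne_zero, by simp⟩
  obtain ⟨e₀, he₀⟩ := ne_zero_iff.1 hr
  refine ⟨q ^ e₀.weight w, zpow_ne_zero _ hq0, (scaleZPow_eq_C_mul_iff hq0).2 fun e he => ?_⟩
  have hzpow_inj : ∀ a b : ℤ, q ^ a = q ^ b → a = b := fun a b hab => by
    by_contra hne
    exact hq (a - b) (sub_ne_zero.2 hne) (by rw [zpow_sub₀ hq0, hab, div_self (zpow_ne_zero _ hq0)])
  have hweight : ∀ e : ι →₀ ℕ, e.weight (n • w) = n * e.weight w := fun e => by
    simp [Finsupp.weight_apply, Finsupp.sum, Finset.mul_sum, mul_left_comm]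
  have hc := (scaleZPow_eq_C_mul_iff hq0).1 h
  have hne := hzpow_inj _ _ ((hc e he).trans (hc e₀ he₀).symm)
  rw [hweight, hweight] at hne
  rw [mul_left_cancel₀ hn hne]

end Scale

section SumVariables

variable {ι κ F : Type*} [Field F]

def sumAlgEquivInr : MvPolynomial (ι ⊕ κ) F ≃ₐ[F] MvPolynomial κ (MvPolynomial ι F) :=
  (renameEquiv F (Equiv.sumComm ι κ)).trans (sumAlgEquiv F κ ι)

@[simp]
theorem sumAlgEquivInr_X_inl (i : ι) :
    sumAlgEquivInr (κ := κ) (F := F) (X (Sum.inl i)) = C (X i) := by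
  simp [sumAlgEquivInr]

@[simp]
theorem sumAlgEquivInr_X_inr (j : κ) :
    sumAlgEquivInr (ι := ι) (F := F) (X (Sum.inr j)) = X j := by
  simp [sumAlgEquivInr]

@[simp]
theorem sumAlgEquivInr_C (c : F) : sumAlgEquivInr (ι := ι) (κ := κ) (C c) = C (C c) := by
  simpa [algebraMap_apply] using (sumAlgEquivInr (ι := ι) (κ := κ)).commutes c

theorem sumAlgEquivInr_translate (a : ι → F) (p : MvPolynomial (ι ⊕ κ) F) :
    sumAlgEquivInr (translate (Sum.elim a 0) p) = map (translate a) (sumAlgEquivInr p) := by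
  have : sumAlgEquivInr.toAlgHom.comp (translate (Sum.elim a 0)) =
      (mapAlgHom (translate a)).comp (sumAlgEquivInr (ι := ι) (κ := κ) (F := F)).toAlgHom :=
    algHom_ext fun i => by cases i <;> simp [translate]
  exact DFunLike.congr_fun this p

theorem sumAlgEquivInr_scaleZPow {q : F} (β : κ → ℤ) (p : MvPolynomial (ι ⊕ κ) F) :
    sumAlgEquivInr (scaleZPow q (Sum.elim 0 β) p) = scaleZPow q β (sumAlgEquivInr p) := by
  have : sumAlgEquivInr.toAlgHom.comp (scaleZPow q (Sum.elim 0 β)) =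
      ((scaleZPow q β).restrictScalars F).comp
        (sumAlgEquivInr (ι := ι) (κ := κ) (F := F)).toAlgHom :=
    algHom_ext fun i => by cases i <;> simp [scaleZPow, algebraMap_eq]
  exact DFunLike.congr_fun this p

end SumVariables

section Semiinvariants

variable {ι κ F : Type*} [Field F] {q : F}

theorem map_translate_eq_self_and_scaleZPow_eq_C_mul [Infinite F] (hq : q ≠ 0) {a : ι → F}
    {β : κ → ℤ} {P : MvPolynomial κ (MvPolynomial ι F)} {c : F}
    (h : map (translate a) (scaleZPow q β P) = C (C c) * P) :
    map (translate a) P = P ∧ scaleZPow q β P = C (C c) * P := by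
  have key : ∀ e, coeff e P ≠ 0 → translate a (coeff e P) = coeff e P ∧ q ^ e.weight β = c := by
    intro e he
    have hW : q ^ e.weight β ≠ 0 := zpow_ne_zero _ hq
    have hcoeff := congrArg (coeff e) h
    rw [coeff_map, coeff_scaleZPow hq, coeff_C_mul, RingHom.coe_coe, map_mul, AlgHom.commutes,
      algebraMap_eq] at hcoeff
    have heig : translate a (coeff e P) = C (c / q ^ e.weight β) * coeff e P := by
      rw [div_eq_inv_mul, C_mul, mul_assoc, ← hcoeff, ← mul_assoc, ← C_mul, inv_mul_cancel₀ hW,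
        C_1, one_mul]
    have h1 := eq_one_of_translate_eq_C_mul he heig
    exact ⟨by rw [heig, h1, C_1, one_mul], ((div_eq_one_iff_eq hW).1 h1).symm⟩
  refine ⟨ext _ _ fun e => ?_, (scaleZPow_eq_C_mul_iff hq).2 fun e he => (key e he).2⟩
  rw [coeff_map]
  by_cases he : coeff e P = 0
  · simp [he]
  · exact (key e he).1

theorem translate_eq_self_and_scaleZPow_eq_C_mul [Infinite F] (hq : q ≠ 0) {a : ι → F}
    {β : κ → ℤ} {p : MvPolynomial (ι ⊕ κ) F} {c : F}
    (h : translate (Sum.elim a 0) (scaleZPow q (Sum.elim 0 β) p) = C c * p) :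
    translate (Sum.elim a 0) p = p ∧ scaleZPow q (Sum.elim 0 β) p = C c * p := by
  have h' := congrArg sumAlgEquivInr h
  rw [sumAlgEquivInr_translate, sumAlgEquivInr_scaleZPow, map_mul, sumAlgEquivInr_C] at h'
  obtain ⟨h1, h2⟩ := map_translate_eq_self_and_scaleZPow_eq_C_mul hq h'
  refine ⟨sumAlgEquivInr.injective ?_, sumAlgEquivInr.injective ?_⟩
  · rw [sumAlgEquivInr_translate, h1]
  · rw [sumAlgEquivInr_scaleZPow, h2, map_mul, sumAlgEquivInr_C]

end Semiinvariants

end MvPolynomial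

section Automorphisms

variable {F L : Type*} [Field F] [Field L] [Algebra F L]

namespace AlgEquiv

theorem zpow_apply_of_apply_eq_add {θ : L ≃ₐ[F] L} {x : L} {c : F}
    (h : θ x = x + algebraMap F L c) (n : ℤ) : (θ ^ n) x = x + algebraMap F L (n * c) := by
  have hinv : θ⁻¹ x = x - algebraMap F L c := by
    rw [aut_inv, symm_apply_eq, map_sub, h, commutes, add_sub_cancel_right]
  induction n using Int.induction_on with
  | zero => simp
  | succ n ih =>
    rw [zpow_add_one, mul_apply, h, map_add, ih, commutes, add_assoc, ← map_add]
    push_cast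
    ring_nf
  | pred n ih =>
    rw [zpow_sub_one, mul_apply, hinv, map_sub, ih, commutes, add_sub_assoc, ← map_sub]
    push_cast
    ring_nf

theorem zpow_apply_of_apply_eq_mul {θ : L ≃ₐ[F] L} {x : L} {u : F} (hu : u ≠ 0)
    (h : θ x = algebraMap F L u * x) (n : ℤ) : (θ ^ n) x = algebraMap F L (u ^ n) * x := by
  have hinv : θ⁻¹ x = algebraMap F L u⁻¹ * x := by
    rw [aut_inv, symm_apply_eq, map_mul, h, commutes, ← mul_assoc, ← map_mul,
      inv_mul_cancel₀ hu, map_one, one_mul]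
  induction n using Int.induction_on with
  | zero => simp
  | succ n ih =>
    rw [zpow_add_one, mul_apply, h, map_mul, ih, commutes, ← mul_assoc, ← map_mul,
      zpow_add_one₀ hu, mul_comm u]
  | pred n ih =>
    rw [zpow_sub_one, mul_apply, hinv, map_mul, ih, commutes, ← mul_assoc, ← map_mul,
      zpow_sub_one₀ hu, mul_comm u⁻¹]

theorem apply_algebraMap_eq_of_forall_X {σ : Type*} [Algebra (MvPolynomial σ F) L]
    [IsScalarTower F (MvPolynomial σ F) L] (θ : L ≃ₐ[F] L)
    (φ : MvPolynomial σ F →ₐ[F] MvPolynomial σ F)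
    (h : ∀ i, θ (algebraMap (MvPolynomial σ F) L (X i)) = algebraMap _ L (φ (X i)))
    (r : MvPolynomial σ F) : θ (algebraMap _ L r) = algebraMap _ L (φ r) := by
  have : θ.toAlgHom.comp (IsScalarTower.toAlgHom F (MvPolynomial σ F) L) =
      (IsScalarTower.toAlgHom F (MvPolynomial σ F) L).comp φ :=
    MvPolynomial.algHom_ext h
  exact DFunLike.congr_fun this r

end AlgEquiv

variable {ι : Type*} [Fintype ι] {θ : ι → L ≃ₐ[F] L} {x : L}

theorem thetaPowS_apply_of_apply_eq_add {c : ι → F} (h : ∀ i, θ i x = x + algebraMap F L (c i))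
    (α : ι → ℤ) : thetaPowS θ α x = x + algebraMap F L (∑ i, α i * c i) := by
  suffices ∀ l : List ι, (l.map fun i => θ i ^ α i).prod x =
      x + algebraMap F L (l.map fun i => α i * c i).sum by
    rw [thetaPowS, this, Finset.sum_map_toList]
  intro l
  induction l with
  | nil => simp
  | cons i l ih =>
    rw [List.map_cons, List.prod_cons, AlgEquiv.mul_apply, ih, map_add, AlgEquiv.commutes,
      AlgEquiv.zpow_apply_of_apply_eq_add (h i), List.map_cons, List.sum_cons, map_add]
    ring

theorem thetaPowS_apply_of_apply_eq_mul {u : ι → F} (hu : ∀ i, u i ≠ 0)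
    (h : ∀ i, θ i x = algebraMap F L (u i) * x) (α : ι → ℤ) :
    thetaPowS θ α x = algebraMap F L (∏ i, u i ^ α i) * x := by
  suffices ∀ l : List ι, (l.map fun i => θ i ^ α i).prod x =
      algebraMap F L (l.map fun i => u i ^ α i).prod * x by
    rw [thetaPowS, this, Finset.prod_map_toList]
  intro l
  induction l with
  | nil => simp
  | cons i l ih =>
    rw [List.map_cons, List.prod_cons, AlgEquiv.mul_apply, ih, map_mul, AlgEquiv.commutes,
      AlgEquiv.zpow_apply_of_apply_eq_mul (hu i) (h i), List.map_cons, List.prod_cons, map_mul]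
    ring

end Automorphisms

section Quotients

theorem AddSubgroup.free_quotient_of_nsmulSaturated {M : Type*} [AddCommGroup M]
    [Module.Finite ℤ M] {A : AddSubgroup M} (hA : A.NSMulSaturated) : Module.Free ℤ (M ⧸ A) := by
  have : Module.Finite ℤ (M ⧸ A) :=
    Module.Finite.of_surjective (QuotientAddGroup.mk' A).toIntLinearMap
      (QuotientAddGroup.mk'_surjective A)
  have : Module.IsTorsionFree ℤ (M ⧸ A) := .of_smul_eq_zero fun n x hx => by
    induction x using QuotientAddGroup.induction_on with
    | H x =>
      rw [← QuotientAddGroup.mk_zsmul, QuotientAddGroup.eq_zero_iff] at hx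
      simpa only [QuotientAddGroup.eq_zero_iff] using AddSubgroup.saturated_iff_zsmul.1 hA n x hx
  infer_instance

def QuotientAddGroup.sumArrowEquivProd {ι κ G : Type*} [AddCommGroup G]
    {H : AddSubgroup (ι ⊕ κ → G)} {A : AddSubgroup (ι → G)} {B : AddSubgroup (κ → G)}
    (h : ∀ γ, γ ∈ H ↔ γ ∘ Sum.inl ∈ A ∧ γ ∘ Sum.inr ∈ B) :
    (ι ⊕ κ → G) ⧸ H ≃+ ((ι → G) ⧸ A) × ((κ → G) ⧸ B) :=
  (QuotientAddGroup.congr H (A.prod B) (LinearEquiv.sumArrowLequivProdArrow ι κ ℤ G).toAddEquiv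
    (by
      ext x
      constructor
      · rintro ⟨γ, hγ, rfl⟩
        exact (h γ).1 hγ
      · intro hx
        exact ⟨Sum.elim x.1 x.2, (h _).2 hx, rfl⟩)).trans
    (QuotientAddGroup.prodAddEquiv A B)

end Quotients

section RationalFunctions

variable {F : Type*} [Field F] {k m : ℕ}

theorem algebraMap_eq_algebraMap_mul_iff (c : F) (p r : MvPolynomial (Fin k ⊕ Fin m) F) :
    algebraMap _ (MvRatS F k m) r = algebraMap F _ c * algebraMap _ (MvRatS F k m) p ↔
      r = C c * p := by
  rw [IsScalarTower.algebraMap_apply F (MvPolynomial (Fin k ⊕ Fin m) F) (MvRatS F k m),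
    ← map_mul, (IsFractionRing.injective _ _).eq_iff, algebraMap_eq]

theorem thetaPowS_algebraMap_of_shift (σ : Fin k → (MvRatS F k m ≃ₐ[F] MvRatS F k m))
    (hσ : ∀ j, σ j (xvS (Sum.inl j)) = xvS (Sum.inl j) + 1)
    (hσfix : ∀ j i, i ≠ Sum.inl j → σ j (xvS i) = xvS i)
    (α : Fin k → ℤ) (r : MvPolynomial (Fin k ⊕ Fin m) F) :
    thetaPowS σ α (algebraMap _ (MvRatS F k m) r) =
      algebraMap _ _ (MvPolynomial.translate (Sum.elim (fun i => (α i : F)) 0) r) := by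
  refine AlgEquiv.apply_algebraMap_eq_of_forall_X _ _ (fun v => ?_) r
  change thetaPowS σ α (xvS v) = _
  rcases v with j | j
  · have hc : ∀ i, σ i (xvS (Sum.inl j)) =
        xvS (Sum.inl j) + algebraMap F _ ((Pi.single j 1 : Fin k → F) i) := by
      intro i
      rcases eq_or_ne i j with rfl | hij
      · simp [hσ]
      · simp [hσfix i (Sum.inl j) (by simpa using hij.symm), hij]
    rw [thetaPowS_apply_of_apply_eq_add hc]
    simp [MvPolynomial.translate, xvS, Pi.single_apply]
  · have hc : ∀ i, σ i (xvS (Sum.inr j)) = xvS (Sum.inr j) + algebraMap F _ ((0 : Fin k → F) i) :=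
      fun i => by simp [hσfix i (Sum.inr j) Sum.inr_ne_inl]
    rw [thetaPowS_apply_of_apply_eq_add hc]
    simp [MvPolynomial.translate, xvS]

theorem thetaPowS_algebraMap_of_scale {q : F} (hq0 : q ≠ 0)
    (τ : Fin m → (MvRatS F k m ≃ₐ[F] MvRatS F k m))
    (hτ : ∀ j, τ j (xvS (Sum.inr j)) = algebraMap F (MvRatS F k m) q * xvS (Sum.inr j))
    (hτfix : ∀ j i, i ≠ Sum.inr j → τ j (xvS i) = xvS i)
    (β : Fin m → ℤ) (r : MvPolynomial (Fin k ⊕ Fin m) F) :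
    thetaPowS τ β (algebraMap _ (MvRatS F k m) r) =
      algebraMap _ _ (scaleZPow q (Sum.elim 0 β) r) := by
  refine AlgEquiv.apply_algebraMap_eq_of_forall_X _ _ (fun v => ?_) r
  change thetaPowS τ β (xvS v) = _
  rcases v with j | j
  · have hu : ∀ i, τ i (xvS (Sum.inl j)) = algebraMap F _ ((1 : Fin m → F) i) * xvS (Sum.inl j) :=
      fun i => by simp [hτfix i (Sum.inl j) Sum.inl_ne_inr]
    rw [thetaPowS_apply_of_apply_eq_mul (fun _ => one_ne_zero) hu]
    simp [scaleZPow, xvS]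
  · have hu : ∀ i, τ i (xvS (Sum.inr j)) =
        algebraMap F _ ((Pi.mulSingle j q : Fin m → F) i) * xvS (Sum.inr j) := by
      intro i
      rcases eq_or_ne i j with rfl | hij
      · simp [hτ]
      · simp [hτfix i (Sum.inr j) (by simpa using hij.symm), hij]
    have hu0 : ∀ i, (Pi.mulSingle j q : Fin m → F) i ≠ 0 := fun i => by
      rcases eq_or_ne i j with rfl | hij <;> simp [*]
    have hprod : ∏ i, (Pi.mulSingle j q : Fin m → F) i ^ β i = q ^ β j := by
      rw [Finset.prod_eq_single j (fun i _ hij => by simp [hij]) (by simp), Pi.mulSingle_eq_same]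
    rw [thetaPowS_apply_of_apply_eq_mul hu0 hu, hprod,
      IsScalarTower.algebraMap_apply F (MvPolynomial (Fin k ⊕ Fin m) F) (MvRatS F k m)]
    simp [scaleZPow, xvS]

theorem mem_isotropyZ_shift_iff (σ : Fin k → (MvRatS F k m ≃ₐ[F] MvRatS F k m))
    (hσ : ∀ j, σ j (xvS (Sum.inl j)) = xvS (Sum.inl j) + 1)
    (hσfix : ∀ j i, i ≠ Sum.inl j → σ j (xvS i) = xvS i)
    (hadd : ∀ α β : Fin k → ℤ, thetaPowS σ (α + β) = thetaPowS σ α * thetaPowS σ β)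
    (h0 : thetaPowS σ (0 : Fin k → ℤ) = 1) (p : MvPolynomial (Fin k ⊕ Fin m) F) (α : Fin k → ℤ) :
    α ∈ isotropyZ (thetaPowS σ) hadd h0 (algebraMap _ (MvRatS F k m) p) ↔
      ∃ c : F, c ≠ 0 ∧ MvPolynomial.translate (Sum.elim (fun i => (α i : F)) 0) p = C c * p := by
  change (∃ c : F, c ≠ 0 ∧ _) ↔ _
  simp_rw [thetaPowS_algebraMap_of_shift σ hσ hσfix, algebraMap_eq_algebraMap_mul_iff]

theorem mem_isotropyZ_scale_iff {q : F} (hq0 : q ≠ 0)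
    (τ : Fin m → (MvRatS F k m ≃ₐ[F] MvRatS F k m))
    (hτ : ∀ j, τ j (xvS (Sum.inr j)) = algebraMap F (MvRatS F k m) q * xvS (Sum.inr j))
    (hτfix : ∀ j i, i ≠ Sum.inr j → τ j (xvS i) = xvS i)
    (hadd : ∀ α β : Fin m → ℤ, thetaPowS τ (α + β) = thetaPowS τ α * thetaPowS τ β)
    (h0 : thetaPowS τ (0 : Fin m → ℤ) = 1) (p : MvPolynomial (Fin k ⊕ Fin m) F) (β : Fin m → ℤ) :
    β ∈ isotropyZ (thetaPowS τ) hadd h0 (algebraMap _ (MvRatS F k m) p) ↔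
      ∃ c : F, c ≠ 0 ∧ scaleZPow q (Sum.elim 0 β) p = C c * p := by
  change (∃ c : F, c ≠ 0 ∧ _) ↔ _
  simp_rw [thetaPowS_algebraMap_of_scale hq0 τ hτ hτfix, algebraMap_eq_algebraMap_mul_iff]

theorem isotropyZ_shift_nsmulSaturated [CharZero F]
    (σ : Fin k → (MvRatS F k m ≃ₐ[F] MvRatS F k m))
    (hσ : ∀ j, σ j (xvS (Sum.inl j)) = xvS (Sum.inl j) + 1)
    (hσfix : ∀ j i, i ≠ Sum.inl j → σ j (xvS i) = xvS i)
    (hadd : ∀ α β : Fin k → ℤ, thetaPowS σ (α + β) = thetaPowS σ α * thetaPowS σ β)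
    (h0 : thetaPowS σ (0 : Fin k → ℤ) = 1) (p : MvPolynomial (Fin k ⊕ Fin m) F) :
    (isotropyZ (thetaPowS σ) hadd h0 (algebraMap _ (MvRatS F k m) p)).NSMulSaturated := by
  refine AddSubgroup.saturated_iff_zsmul.2 fun n α h => or_iff_not_imp_left.2 fun hn => ?_
  rw [mem_isotropyZ_shift_iff σ hσ hσfix] at h ⊢
  obtain ⟨c, -, hc⟩ := h
  have hsmul : (n : F) • Sum.elim (fun i => (α i : F)) 0 =
      Sum.elim (fun i => ((n • α) i : F)) (0 : Fin m → F) := by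
    funext i
    cases i <;> simp
  exact exists_translate_eq_C_mul_of_zsmul hn (by rwa [hsmul])

theorem isotropyZ_scale_nsmulSaturated {q : F} (hq0 : q ≠ 0) (hq : ∀ l : ℤ, l ≠ 0 → q ^ l ≠ 1)
    (τ : Fin m → (MvRatS F k m ≃ₐ[F] MvRatS F k m))
    (hτ : ∀ j, τ j (xvS (Sum.inr j)) = algebraMap F (MvRatS F k m) q * xvS (Sum.inr j))
    (hτfix : ∀ j i, i ≠ Sum.inr j → τ j (xvS i) = xvS i)
    (hadd : ∀ α β : Fin m → ℤ, thetaPowS τ (α + β) = thetaPowS τ α * thetaPowS τ β)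
    (h0 : thetaPowS τ (0 : Fin m → ℤ) = 1) (p : MvPolynomial (Fin k ⊕ Fin m) F) :
    (isotropyZ (thetaPowS τ) hadd h0 (algebraMap _ (MvRatS F k m) p)).NSMulSaturated := by
  refine AddSubgroup.saturated_iff_zsmul.2 fun n β h => or_iff_not_imp_left.2 fun hn => ?_
  rw [mem_isotropyZ_scale_iff hq0 τ hτ hτfix] at h ⊢
  obtain ⟨c, -, hc⟩ := h
  have hsmul : n • Sum.elim (0 : Fin k → ℤ) β = Sum.elim (0 : Fin k → ℤ) (n • β) := by
    funext i
    cases i <;> simp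
  exact exists_scaleZPow_eq_C_mul_of_zsmul hq0 hq hn (c := c) (by rwa [hsmul])

theorem thetaPowS_apply_eq_of_mul_apply_eq [Infinite F] {q : F} (hq0 : q ≠ 0)
    (σ : Fin k → (MvRatS F k m ≃ₐ[F] MvRatS F k m))
    (hσ : ∀ j, σ j (xvS (Sum.inl j)) = xvS (Sum.inl j) + 1)
    (hσfix : ∀ j i, i ≠ Sum.inl j → σ j (xvS i) = xvS i)
    (τ : Fin m → (MvRatS F k m ≃ₐ[F] MvRatS F k m))
    (hτ : ∀ j, τ j (xvS (Sum.inr j)) = algebraMap F (MvRatS F k m) q * xvS (Sum.inr j))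
    (hτfix : ∀ j i, i ≠ Sum.inr j → τ j (xvS i) = xvS i)
    {p : MvPolynomial (Fin k ⊕ Fin m) F} {α : Fin k → ℤ} {β : Fin m → ℤ} {c : F}
    (h : (thetaPowS σ α * thetaPowS τ β) (algebraMap _ (MvRatS F k m) p) =
      algebraMap F _ c * algebraMap _ _ p) :
    thetaPowS σ α (algebraMap _ (MvRatS F k m) p) = algebraMap _ _ p ∧
      thetaPowS τ β (algebraMap _ (MvRatS F k m) p) = algebraMap F _ c * algebraMap _ _ p := by
  rw [AlgEquiv.mul_apply, thetaPowS_algebraMap_of_scale hq0 τ hτ hτfix,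
    thetaPowS_algebraMap_of_shift σ hσ hσfix, algebraMap_eq_algebraMap_mul_iff] at h
  obtain ⟨h1, h2⟩ := MvPolynomial.translate_eq_self_and_scaleZPow_eq_C_mul hq0 h
  rw [thetaPowS_algebraMap_of_shift σ hσ hσfix, h1, thetaPowS_algebraMap_of_scale hq0 τ hτ hτfix,
    algebraMap_eq_algebraMap_mul_iff]
  exact ⟨rfl, h2⟩

theorem mem_isotropyZ_sum_iff [Infinite F] {q : F} (hq0 : q ≠ 0)
    (σ : Fin k → (MvRatS F k m ≃ₐ[F] MvRatS F k m))
    (hσ : ∀ j, σ j (xvS (Sum.inl j)) = xvS (Sum.inl j) + 1)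
    (hσfix : ∀ j i, i ≠ Sum.inl j → σ j (xvS i) = xvS i)
    (τ : Fin m → (MvRatS F k m ≃ₐ[F] MvRatS F k m))
    (hτ : ∀ j, τ j (xvS (Sum.inr j)) = algebraMap F (MvRatS F k m) q * xvS (Sum.inr j))
    (hτfix : ∀ j i, i ≠ Sum.inr j → τ j (xvS i) = xvS i)
    (haddσ : ∀ α β : Fin k → ℤ, thetaPowS σ (α + β) = thetaPowS σ α * thetaPowS σ β)
    (h0σ : thetaPowS σ (0 : Fin k → ℤ) = 1)
    (haddτ : ∀ α β : Fin m → ℤ, thetaPowS τ (α + β) = thetaPowS τ α * thetaPowS τ β)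
    (h0τ : thetaPowS τ (0 : Fin m → ℤ) = 1)
    (haddF : ∀ α β : (Fin k ⊕ Fin m) → ℤ,
      thetaPowS σ ((α + β) ∘ Sum.inl) * thetaPowS τ ((α + β) ∘ Sum.inr) =
        (thetaPowS σ (α ∘ Sum.inl) * thetaPowS τ (α ∘ Sum.inr)) *
          (thetaPowS σ (β ∘ Sum.inl) * thetaPowS τ (β ∘ Sum.inr)))
    (h0F : thetaPowS σ ((0 : (Fin k ⊕ Fin m) → ℤ) ∘ Sum.inl) *
      thetaPowS τ ((0 : (Fin k ⊕ Fin m) → ℤ) ∘ Sum.inr) = 1)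
    (p : MvPolynomial (Fin k ⊕ Fin m) F) (γ : Fin k ⊕ Fin m → ℤ) :
    γ ∈ isotropyZ (fun γ : (Fin k ⊕ Fin m) → ℤ =>
        thetaPowS σ (γ ∘ Sum.inl) * thetaPowS τ (γ ∘ Sum.inr)) haddF h0F
        (algebraMap _ (MvRatS F k m) p) ↔
      γ ∘ Sum.inl ∈ isotropyZ (thetaPowS σ) haddσ h0σ (algebraMap _ (MvRatS F k m) p) ∧
        γ ∘ Sum.inr ∈ isotropyZ (thetaPowS τ) haddτ h0τ (algebraMap _ (MvRatS F k m) p) := by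
  constructor
  · rintro ⟨c, hc, h⟩
    obtain ⟨h₁, h₂⟩ := thetaPowS_apply_eq_of_mul_apply_eq hq0 σ hσ hσfix τ hτ hτfix h
    exact ⟨⟨1, one_ne_zero, by rw [h₁, map_one, one_mul]⟩, ⟨c, hc, h₂⟩⟩
  · rintro ⟨⟨c₁, hc₁, h₁⟩, ⟨c₂, hc₂, h₂⟩⟩
    refine ⟨c₁ * c₂, mul_ne_zero hc₁ hc₂, ?_⟩
    rw [AlgEquiv.mul_apply, h₂, map_mul, AlgEquiv.commutes, h₁, map_mul, mul_left_comm, mul_assoc]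

end RationalFunctions

end

theorem stmt_6_general {F : Type*} [Field F] [CharZero F] {k m : ℕ}
    (q : F) (hq0 : q ≠ 0) (hq : ∀ l : ℤ, l ≠ 0 → q ^ l ≠ 1)
    (σ : Fin k → (MvRatS F k m ≃ₐ[F] MvRatS F k m))
    (hσ : ∀ j, σ j (xvS (Sum.inl j)) = xvS (Sum.inl j) + 1)
    (hσfix : ∀ j i, i ≠ Sum.inl j → σ j (xvS i) = xvS i)
    (τ : Fin m → (MvRatS F k m ≃ₐ[F] MvRatS F k m))
    (hτ : ∀ j, τ j (xvS (Sum.inr j)) = algebraMap F (MvRatS F k m) q * xvS (Sum.inr j))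
    (hτfix : ∀ j i, i ≠ Sum.inr j → τ j (xvS i) = xvS i)
    (haddσ : ∀ α β : Fin k → ℤ, thetaPowS σ (α + β) = thetaPowS σ α * thetaPowS σ β)
    (h0σ : thetaPowS σ (0 : Fin k → ℤ) = 1)
    (haddτ : ∀ α β : Fin m → ℤ, thetaPowS τ (α + β) = thetaPowS τ α * thetaPowS τ β)
    (h0τ : thetaPowS τ (0 : Fin m → ℤ) = 1)
    (haddF : ∀ α β : (Fin k ⊕ Fin m) → ℤ,
      thetaPowS σ ((α + β) ∘ Sum.inl) * thetaPowS τ ((α + β) ∘ Sum.inr) =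
        (thetaPowS σ (α ∘ Sum.inl) * thetaPowS τ (α ∘ Sum.inr)) *
          (thetaPowS σ (β ∘ Sum.inl) * thetaPowS τ (β ∘ Sum.inr)))
    (h0F : thetaPowS σ ((0 : (Fin k ⊕ Fin m) → ℤ) ∘ Sum.inl) *
      thetaPowS τ ((0 : (Fin k ⊕ Fin m) → ℤ) ∘ Sum.inr) = 1)
    (p : MvPolynomial (Fin k ⊕ Fin m) F) :
    (∀ (α : Fin k → ℤ) (β : Fin m → ℤ) (c : F), c ≠ 0 →
      (thetaPowS σ α * thetaPowS τ β)
          (algebraMap (MvPolynomial (Fin k ⊕ Fin m) F) (MvRatS F k m) p) =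
        algebraMap F (MvRatS F k m) c *
          algebraMap (MvPolynomial (Fin k ⊕ Fin m) F) (MvRatS F k m) p →
      thetaPowS σ α (algebraMap (MvPolynomial (Fin k ⊕ Fin m) F) (MvRatS F k m) p) =
          algebraMap (MvPolynomial (Fin k ⊕ Fin m) F) (MvRatS F k m) p ∧
        thetaPowS τ β (algebraMap (MvPolynomial (Fin k ⊕ Fin m) F) (MvRatS F k m) p) =
          algebraMap F (MvRatS F k m) c *
            algebraMap (MvPolynomial (Fin k ⊕ Fin m) F) (MvRatS F k m) p) ∧
    Nonempty ((((Fin k ⊕ Fin m) → ℤ) ⧸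
        isotropyZ (fun γ : (Fin k ⊕ Fin m) → ℤ =>
          thetaPowS σ (γ ∘ Sum.inl) * thetaPowS τ (γ ∘ Sum.inr)) haddF h0F
          (algebraMap (MvPolynomial (Fin k ⊕ Fin m) F) (MvRatS F k m) p)) ≃+
      (((Fin k → ℤ) ⧸ isotropyZ (thetaPowS σ) haddσ h0σ
          (algebraMap (MvPolynomial (Fin k ⊕ Fin m) F) (MvRatS F k m) p)) ×
        ((Fin m → ℤ) ⧸ isotropyZ (thetaPowS τ) haddτ h0τ
          (algebraMap (MvPolynomial (Fin k ⊕ Fin m) F) (MvRatS F k m) p)))) ∧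
    Module.Free ℤ (((Fin k ⊕ Fin m) → ℤ) ⧸
      isotropyZ (fun γ : (Fin k ⊕ Fin m) → ℤ =>
        thetaPowS σ (γ ∘ Sum.inl) * thetaPowS τ (γ ∘ Sum.inr)) haddF h0F
        (algebraMap (MvPolynomial (Fin k ⊕ Fin m) F) (MvRatS F k m) p)) := by
  have hsplit := mem_isotropyZ_sum_iff hq0 σ hσ hσfix τ hτ hτfix haddσ h0σ haddτ h0τ haddF h0F p
  have := AddSubgroup.free_quotient_of_nsmulSaturated
    (isotropyZ_shift_nsmulSaturated σ hσ hσfix haddσ h0σ p)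
  have := AddSubgroup.free_quotient_of_nsmulSaturated
    (isotropyZ_scale_nsmulSaturated hq0 hq τ hτ hτfix haddτ h0τ p)
  let e := QuotientAddGroup.sumArrowEquivProd hsplit
  exact ⟨fun α β c _ h => thetaPowS_apply_eq_of_mul_apply_eq hq0 σ hσ hσfix τ hτ hτfix h, ⟨e⟩,
    Module.Free.of_equiv e.toIntLinearEquiv.symm⟩

set_option maxHeartbeats 1000000 in
/-- **Proposition: `G_p = G^σ_p ⊕ G^τ_p`.** Let `p ∈ F[x]` be nonconstant and
`G = G^σ ⊕ G^τ`. If `θ = σ₀·τ₀ ∈ G_p` with `σ₀ ∈ G^σ`, `τ₀ ∈ G^τ` and `θ(p) = c·p`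
(`c ∈ F` nonzero), then `σ₀(p) = p` and `τ₀(p) = c·p`. Consequently
`G/G_p ≅ G^σ/G^σ_p ⊕ G^τ/G^τ_p` is a free abelian group. -/
theorem stmt_6 {F : Type*} [Field F] [CharZero F] {k m : ℕ}
    (q : F) (hq0 : q ≠ 0) (hq : ∀ l : ℤ, l ≠ 0 → q ^ l ≠ 1)
    (σ : Fin k → (MvRatS F k m ≃ₐ[F] MvRatS F k m))
    (hσ : ∀ j, σ j (xvS (Sum.inl j)) = xvS (Sum.inl j) + 1)
    (hσfix : ∀ j i, i ≠ Sum.inl j → σ j (xvS i) = xvS i)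
    (τ : Fin m → (MvRatS F k m ≃ₐ[F] MvRatS F k m))
    (hτ : ∀ j, τ j (xvS (Sum.inr j)) = algebraMap F (MvRatS F k m) q * xvS (Sum.inr j))
    (hτfix : ∀ j i, i ≠ Sum.inr j → τ j (xvS i) = xvS i)
    (haddσ : ∀ α β : Fin k → ℤ, thetaPowS σ (α + β) = thetaPowS σ α * thetaPowS σ β)
    (h0σ : thetaPowS σ (0 : Fin k → ℤ) = 1)
    (haddτ : ∀ α β : Fin m → ℤ, thetaPowS τ (α + β) = thetaPowS τ α * thetaPowS τ β)
    (h0τ : thetaPowS τ (0 : Fin m → ℤ) = 1)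
    (haddF : ∀ α β : (Fin k ⊕ Fin m) → ℤ,
      thetaPowS σ ((α + β) ∘ Sum.inl) * thetaPowS τ ((α + β) ∘ Sum.inr) =
        (thetaPowS σ (α ∘ Sum.inl) * thetaPowS τ (α ∘ Sum.inr)) *
          (thetaPowS σ (β ∘ Sum.inl) * thetaPowS τ (β ∘ Sum.inr)))
    (h0F : thetaPowS σ ((0 : (Fin k ⊕ Fin m) → ℤ) ∘ Sum.inl) *
      thetaPowS τ ((0 : (Fin k ⊕ Fin m) → ℤ) ∘ Sum.inr) = 1)
    (p : MvPolynomial (Fin k ⊕ Fin m) F) (hp : 0 < p.totalDegree) :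
    (∀ (α : Fin k → ℤ) (β : Fin m → ℤ) (c : F), c ≠ 0 →
      (thetaPowS σ α * thetaPowS τ β)
          (algebraMap (MvPolynomial (Fin k ⊕ Fin m) F) (MvRatS F k m) p) =
        algebraMap F (MvRatS F k m) c *
          algebraMap (MvPolynomial (Fin k ⊕ Fin m) F) (MvRatS F k m) p →
      thetaPowS σ α (algebraMap (MvPolynomial (Fin k ⊕ Fin m) F) (MvRatS F k m) p) =
          algebraMap (MvPolynomial (Fin k ⊕ Fin m) F) (MvRatS F k m) p ∧
        thetaPowS τ β (algebraMap (MvPolynomial (Fin k ⊕ Fin m) F) (MvRatS F k m) p) =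
          algebraMap F (MvRatS F k m) c *
            algebraMap (MvPolynomial (Fin k ⊕ Fin m) F) (MvRatS F k m) p) ∧
    Nonempty ((((Fin k ⊕ Fin m) → ℤ) ⧸
        isotropyZ (fun γ : (Fin k ⊕ Fin m) → ℤ =>
          thetaPowS σ (γ ∘ Sum.inl) * thetaPowS τ (γ ∘ Sum.inr)) haddF h0F
          (algebraMap (MvPolynomial (Fin k ⊕ Fin m) F) (MvRatS F k m) p)) ≃+
      (((Fin k → ℤ) ⧸ isotropyZ (thetaPowS σ) haddσ h0σ
          (algebraMap (MvPolynomial (Fin k ⊕ Fin m) F) (MvRatS F k m) p)) ×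
        ((Fin m → ℤ) ⧸ isotropyZ (thetaPowS τ) haddτ h0τ
          (algebraMap (MvPolynomial (Fin k ⊕ Fin m) F) (MvRatS F k m) p)))) ∧
    Module.Free ℤ (((Fin k ⊕ Fin m) → ℤ) ⧸
      isotropyZ (fun γ : (Fin k ⊕ Fin m) → ℤ =>
        thetaPowS σ (γ ∘ Sum.inl) * thetaPowS τ (γ ∘ Sum.inr)) haddF h0F
        (algebraMap (MvPolynomial (Fin k ⊕ Fin m) F) (MvRatS F k m) p)) :=
  stmt_6_general q hq0 hq σ hσ hσfix τ hτ hτfix haddσ h0σ haddτ h0τ haddF h0F p
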